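/- arXiv:cs/0410008 — 4 statements merged into one kernel-verified Lean document; each statement's English description precedes it below -/
import Mathlib

section
/- Let 𝒳 and 𝒳̂ be finite nonempty alphabets, let p be a probability mass function on 𝒳, and let d : 𝒳 × 𝒳̂ → ℝ be a nonnegative distortion measure. For D ≥ 0 define the (informational) rate-distortion function R(D) as the infimum of the mutual informations I[X;Q] over all pairs of random variables (X,Q) with values in 𝒳 × 𝒳̂ such that X has distribution p and E[d(X,Q)] ≤ D. Let X₁,…,Xₙ be i.i.d. with distribution p, let e : 𝒳ⁿ → Fin N be an encoder, and for each i ∈ {1,…,n} let gᵢ : Fin N × 𝒳^{i−1} → 𝒳̂ be a decoder; set M = e(X₁,…,Xₙ) and X̂ᵢ = gᵢ(M, X₁,…,X_{i−1}). If D̄ = (1/n) Σ_{i=1}^n E[d(Xᵢ, X̂ᵢ)], then (1/n) log N ≥ R(D̄). -/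
open MeasureTheory
open scoped ENNReal

/-- Shannon entropy (in nats) of a finitely-valued random variable `X` under the
measure `μ`: `H[X] = −Σ_s P[X = s] log P[X = s]`. -/
noncomputable def shannonEntropy {Ω S : Type*} [MeasurableSpace Ω] [Fintype S]
    (μ : Measure Ω) (X : Ω → S) : ℝ :=
  ∑ s : S, Real.negMulLog (μ (X ⁻¹' {s})).toReal

/-- Conditional Shannon entropy (in nats): `H[X | Y] = H[X, Y] − H[Y]`. -/
noncomputable def condEntropy {Ω S T : Type*} [MeasurableSpace Ω] [Fintype S] [Fintype T]
    (μ : Measure Ω) (X : Ω → S) (Y : Ω → T) : ℝ :=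
  shannonEntropy μ (fun ω => (X ω, Y ω)) - shannonEntropy μ Y

/-- Mutual information (in nats): `I[X ; Y] = H[X] − H[X | Y]`. -/
noncomputable def mutualInfo {Ω S T : Type*} [MeasurableSpace Ω] [Fintype S] [Fintype T]
    (μ : Measure Ω) (X : Ω → S) (Y : Ω → T) : ℝ :=
  shannonEntropy μ X - condEntropy μ X Y

/-- Conditional mutual information (in nats):
`I[X ; Y | Z] = H[X | Z] − H[X | Y, Z]`. -/
noncomputable def condMutualInfo {Ω S T U : Type*} [MeasurableSpace Ω] [Fintype S] [Fintype T] [Fintype U]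
    (μ : Measure Ω) (X : Ω → S) (Y : Ω → T) (Z : Ω → U) : ℝ :=
  condEntropy μ X Z - condEntropy μ X (fun ω => (Y ω, Z ω))

/-- The (informational) rate-distortion function: for a source pmf `p` on `𝒳`,
a distortion measure `d : 𝒳 × 𝒳' → ℝ`, and a distortion level `D`, `rdFun p d D`
is the infimum of the mutual informations `I[X ; Q]` over all pairs of random
variables `(X, Q)` (on any probability space) with values in `𝒳 × 𝒳'` such that
`X` has distribution `p` and `E[d(X, Q)] ≤ D` (the infimum of the empty set
being `⊤`). -/
noncomputable def rdFun {𝒳 𝒳' : Type} [Fintype 𝒳] [Fintype 𝒳']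
    (p : 𝒳 → ℝ) (d : 𝒳 → 𝒳' → ℝ) (D : ℝ) : ℝ≥0∞ :=
  sInf { r : ℝ≥0∞ | ∃ (Ω : Type) (_ : MeasurableSpace Ω) (μ : Measure Ω),
    IsProbabilityMeasure μ ∧ ∃ (X : Ω → 𝒳) (Q : Ω → 𝒳'),
      (∀ a, MeasurableSet (X ⁻¹' {a})) ∧ (∀ b, MeasurableSet (Q ⁻¹' {b})) ∧
      (∀ a, (μ (X ⁻¹' {a})).toReal = p a) ∧
      (∑ a : 𝒳, ∑ b : 𝒳', (μ (X ⁻¹' {a} ∩ Q ⁻¹' {b})).toReal * d a b) ≤ D ∧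
      r = ENNReal.ofReal (mutualInfo μ X Q) }


/-!
Time sharing. Let `J` be uniform on `Fin n` and independent of the block. The pair `(X_J, X̂_J)`
has `X_J ∼ p` and expected distortion `D̄`, so `R(D̄) ≤ I(X_J; X̂_J)`. By submodularity,
`I(X_J; X̂_J) ≤ I(X_J; X̂_J, J) = H(p) − (1/n) ∑ᵢ H(Xᵢ | X̂ᵢ)`, the source being i.i.d.
As `X̂ᵢ` is a function of `(M, X^{i−1})`, data processing and the chain rule give
`∑ᵢ H(Xᵢ | X̂ᵢ) ≥ ∑ᵢ H(Xᵢ | M, X^{i−1}) = H(Xⁿ | M) ≥ n H(p) − log N`, whence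
`I(X_J; X̂_J) ≤ (log N) / n`.

Only laws matter, so everything is computed on the finite space `Fin n × (Fin n → 𝒳)` carrying the
weight `(1/n) ∏ⱼ p(xⱼ)`; `μ` enters only through the laws of the pairs `(Xᵢ, X̂ᵢ)`.
-/

open Finset Real

lemma Real.negMulLog_le_sub_sub_mul_log {q r : ℝ} (hq : 0 ≤ q) (hr : 0 ≤ r)
    (hqr : r = 0 → q = 0) : negMulLog q ≤ r - q - q * log r := by
  rcases hr.eq_or_lt with rfl | hr
  · simp [hqr rfl]
  have hsplit : negMulLog q = r * negMulLog (q / r) - q * log r := by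
    have h := negMulLog_mul r (q / r)
    rw [mul_div_cancel₀ q hr.ne'] at h
    rw [h, negMulLog]
    field_simp
    ring
  have hbound := mul_le_mul_of_nonneg_left (negMulLog_le_one_sub_self (div_nonneg hq hr.le)) hr.le
  rw [mul_sub, mul_one, mul_div_cancel₀ q hr.ne'] at hbound
  linarith

/-- Subadditivity of entropy, for an unnormalized joint weight. -/
lemma Real.sum_negMulLog_add_negMulLog_sum_le {S T : Type*} [Fintype S] [Fintype T]
    (q : S → T → ℝ) (hq : ∀ s t, 0 ≤ q s t) :
    ∑ s, ∑ t, negMulLog (q s t) + negMulLog (∑ s, ∑ t, q s t)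
      ≤ ∑ s, negMulLog (∑ t, q s t) + ∑ t, negMulLog (∑ s, q s t) := by
  set A := fun s => ∑ t, q s t
  set B := fun t => ∑ s, q s t
  set C := ∑ s, ∑ t, q s t
  have hA : ∀ s t, q s t ≤ A s := fun s t => single_le_sum (fun t _ => hq s t) (mem_univ t)
  have hB : ∀ s t, q s t ≤ B t := fun s t => single_le_sum (fun s _ => hq s t) (mem_univ s)
  have hC : ∀ s t, q s t ≤ C := fun s t =>
    (hA s t).trans (single_le_sum (fun s _ => sum_nonneg fun t _ => hq s t) (mem_univ s))
  -- Gibbs' inequality against the product `A s * B t / C` of the marginals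
  have hgibbs : ∀ s t, negMulLog (q s t) ≤ A s * B t / C - q s t
      - (q s t * log (A s) + q s t * log (B t) - q s t * log C) := by
    intro s t
    rcases (hq s t).eq_or_lt with h0 | h0
    · rw [← h0]
      simpa using div_nonneg (mul_nonneg ((hq s t).trans (hA s t)) ((hq s t).trans (hB s t)))
        ((hq s t).trans (hC s t))
    have hApos := h0.trans_le (hA s t)
    have hBpos := h0.trans_le (hB s t)
    have hCpos := h0.trans_le (hC s t)
    have := negMulLog_le_sub_sub_mul_log (r := A s * B t / C) (hq s t) (by positivity)
      (fun h => absurd h (by positivity))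
    rwa [log_div (by positivity) hCpos.ne', log_mul hApos.ne' hBpos.ne', mul_sub, mul_add] at this
  have hsumAB : ∑ s, ∑ t, A s * B t / C = C := by
    simp_rw [← sum_div, ← sum_mul_sum]
    rw [show ∑ t, B t = C from sum_comm]
    exact mul_self_div_self C
  have hlogA : ∑ s, ∑ t, q s t * log (A s) = -∑ s, negMulLog (A s) := by
    simp only [negMulLog, neg_mul, sum_neg_distrib, neg_neg, ← sum_mul]; rfl
  have hlogB : ∑ s, ∑ t, q s t * log (B t) = -∑ t, negMulLog (B t) := by
    rw [sum_comm]; simp only [negMulLog, neg_mul, sum_neg_distrib, neg_neg, ← sum_mul]; rfl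
  have hlogC : ∑ s, ∑ t, q s t * log C = -negMulLog C := by
    simp only [negMulLog, neg_mul, neg_neg, ← sum_mul]; rfl
  have := sum_le_sum fun s (_ : s ∈ univ) => sum_le_sum fun t (_ : t ∈ univ) => hgibbs s t
  simp only [sum_sub_distrib, sum_add_distrib, hsumAB, hlogA, hlogB, hlogC] at this
  linarith

namespace FiniteWeight

variable {Ω ι S T U : Type*}

-- The law of `(J, ω)` with `J ∼ c` independent of `ω ∼ w`.
def mixture (c : ι → ℝ) (w : Ω → ℝ) (ω : ι × Ω) : ℝ := c ω.1 * w ω.2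

lemma mixture_nonneg {c : ι → ℝ} {w : Ω → ℝ} (hc : 0 ≤ c) (hw : 0 ≤ w) : 0 ≤ mixture c w :=
  fun _ => mul_nonneg (hc _) (hw _)

variable [Fintype Ω]

noncomputable def pushforward (w : Ω → ℝ) (X : Ω → S) (s : S) : ℝ :=
  ∑ ω, (X ⁻¹' {s}).indicator w ω

noncomputable def entropy [Fintype S] (w : Ω → ℝ) (X : Ω → S) : ℝ :=
  ∑ s, negMulLog (pushforward w X s)

noncomputable def mutualInformation [Fintype S] [Fintype T] (w : Ω → ℝ) (X : Ω → S)
    (Y : Ω → T) : ℝ :=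
  entropy w X + entropy w Y - entropy w (fun ω => (X ω, Y ω))

variable {w : Ω → ℝ}

lemma pushforward_apply [DecidableEq S] (w : Ω → ℝ) (X : Ω → S) (s : S) :
    pushforward w X s = ∑ ω, if X ω = s then w ω else 0 := by
  refine sum_congr rfl fun ω _ => ?_
  by_cases h : X ω = s <;> simp [h]

lemma pushforward_nonneg (hw : 0 ≤ w) (X : Ω → S) (s : S) : 0 ≤ pushforward w X s :=
  sum_nonneg fun ω _ => Set.indicator_nonneg (fun ω _ => hw ω) ω

lemma pushforward_id (w : Ω → ℝ) : pushforward w id = w := by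
  classical
  ext s
  simp [pushforward_apply]

lemma sum_pushforward [Fintype S] (w : Ω → ℝ) (X : Ω → S) :
    ∑ s, pushforward w X s = ∑ ω, w ω := by
  classical
  simp_rw [pushforward_apply, sum_comm (γ := S), sum_ite_eq, mem_univ, if_true]

lemma sum_pushforward_prod_left [Fintype S] (w : Ω → ℝ) (X : Ω → S) (Y : Ω → T) (t : T) :
    ∑ s, pushforward w (fun ω => (X ω, Y ω)) (s, t) = pushforward w Y t := by
  classical
  simp_rw [pushforward_apply, sum_comm (γ := S), Prod.mk.injEq, ite_and, sum_ite_eq, mem_univ,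
    if_true]

lemma sum_pushforward_prod_right [Fintype T] (w : Ω → ℝ) (X : Ω → S) (Y : Ω → T) (s : S) :
    ∑ t, pushforward w (fun ω => (X ω, Y ω)) (s, t) = pushforward w X s := by
  classical
  simp_rw [pushforward_apply, sum_comm (γ := T), Prod.mk.injEq, and_comm (a := X _ = s), ite_and,
    sum_ite_eq, mem_univ, if_true]

lemma pushforward_comp_apply {f : S → T} (hf : Function.Injective f) (X : Ω → S) (s : S) :
    pushforward w (fun ω => f (X ω)) (f s) = pushforward w X s := by
  classical
  simp only [pushforward_apply, hf.eq_iff]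

lemma entropy_id (w : Ω → ℝ) : entropy w id = ∑ ω, negMulLog (w ω) := by
  rw [entropy, pushforward_id]

lemma entropy_eq_of_injective [Fintype S] [Fintype T] {X : Ω → S} {Y : Ω → T} {f : S → T}
    (hf : Function.Injective f) (hY : ∀ ω, Y ω = f (X ω)) : entropy w Y = entropy w X := by
  classical
  obtain rfl : Y = fun ω => f (X ω) := funext hY
  refine (Fintype.sum_of_injective f hf _ _ (fun t ht => ?_) (fun s => ?_)).symm
  · rw [pushforward_apply, sum_eq_zero fun ω _ => if_neg fun h => ht ⟨X ω, h⟩, negMulLog_zero]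
  · rw [pushforward_comp_apply hf]

lemma entropy_le_log_card [Fintype S] (hw : 0 ≤ w) (hw1 : ∑ ω, w ω = 1) (X : Ω → S) :
    entropy w X ≤ log (Fintype.card S) := by
  rcases (Fintype.card S).eq_zero_or_pos with hS | hS
  · have : IsEmpty S := Fintype.card_eq_zero_iff.mp hS
    simp [entropy]
  have hc : (0 : ℝ) < Fintype.card S := by exact_mod_cast hS
  calc entropy w X
      ≤ ∑ s, ((Fintype.card S : ℝ)⁻¹ - pushforward w X s
          - pushforward w X s * log (Fintype.card S : ℝ)⁻¹) :=
        sum_le_sum fun s _ => negMulLog_le_sub_sub_mul_log (pushforward_nonneg hw X s)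
          (by positivity) (fun h => absurd h (by positivity))
    _ = log (Fintype.card S) := by
        simp only [sum_sub_distrib, ← sum_mul, sum_pushforward, hw1, sum_const, card_univ,
          nsmul_eq_mul, log_inv]
        field_simp
        ring

section Conditioning

variable [Fintype S] [Fintype T] [Fintype U]

theorem entropy_triple_add_entropy_le (hw : 0 ≤ w) (X : Ω → S) (Y : Ω → T) (Z : Ω → U) :
    entropy w (fun ω => (X ω, Y ω, Z ω)) + entropy w Z
      ≤ entropy w (fun ω => (X ω, Z ω)) + entropy w (fun ω => (Y ω, Z ω)) := by
  set q := fun u s t => pushforward w (fun ω => (X ω, Y ω, Z ω)) (s, t, u)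
  have hXZ : ∀ u s, ∑ t, q u s t = pushforward w (fun ω => (X ω, Z ω)) (s, u) := fun u s => by
    rw [← sum_pushforward_prod_right w (fun ω => (X ω, Z ω)) Y]
    exact sum_congr rfl fun t _ =>
      pushforward_comp_apply (f := fun v : (S × U) × T => (v.1.1, v.2, v.1.2))
        (fun a b h => by simp only [Prod.mk.injEq] at h; grind)
        (fun ω => ((X ω, Z ω), Y ω)) ((s, u), t)
  have hYZ : ∀ u t, ∑ s, q u s t = pushforward w (fun ω => (Y ω, Z ω)) (t, u) := fun u t =>
    sum_pushforward_prod_left w X _ (t, u)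
  have key := sum_le_sum fun u (_ : u ∈ univ) =>
    sum_negMulLog_add_negMulLog_sum_le (q u) fun s t => pushforward_nonneg hw _ _
  simp only [sum_add_distrib, hXZ, hYZ, sum_pushforward_prod_left] at key
  simp only [entropy, Fintype.sum_prod_type]
  rw [sum_comm (s := univ (α := S)) (t := univ (α := U)),
    sum_comm (s := univ (α := T)) (t := univ (α := U))]
  rwa [show ∀ f : S → T → U → ℝ, ∑ s, ∑ t, ∑ u, f s t u = ∑ u, ∑ s, ∑ t, f s t u from
    fun f => (sum_congr rfl fun _ _ => sum_comm).trans sum_comm]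

theorem entropy_pair_sub_entropy_le_comp (hw : 0 ≤ w) (X : Ω → S) (Y : Ω → T) (f : T → U) :
    entropy w (fun ω => (X ω, Y ω)) - entropy w Y
      ≤ entropy w (fun ω => (X ω, f (Y ω))) - entropy w (fun ω => f (Y ω)) := by
  have h := entropy_triple_add_entropy_le hw X Y (fun ω => f (Y ω))
  rw [entropy_eq_of_injective (f := fun v : S × T => (v.1, v.2, f v.2))
      (fun a b h => by simp only [Prod.mk.injEq] at h; exact Prod.ext h.1 h.2.1)
      (X := fun ω => (X ω, Y ω)) (fun ω => rfl),
    entropy_eq_of_injective (f := fun t : T => (t, f t)) (fun a b h => congrArg Prod.fst h)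
      (X := Y) (fun ω => rfl)] at h
  linarith

variable {n : ℕ}

-- The past `(x j)_{j < k}`, indexed by a subtype so that `k` may range over all of `ℕ`.
def initSeg (k : ℕ) (x : Fin n → S) : {j : Fin n // (j : ℕ) < k} → S := fun j => x j

lemma entropy_initSeg_succ (w : Ω → ℝ) (M : Ω → T) (Y : Ω → Fin n → S) (i : Fin n) :
    entropy w (fun ω => (M ω, initSeg (i + 1) (Y ω)))
      = entropy w (fun ω => (Y ω i, M ω, initSeg i (Y ω))) := by
  refine entropy_eq_of_injective
    (f := fun v : S × T × ({j : Fin n // (j : ℕ) < i} → S) =>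
      (v.2.1, fun j : {j : Fin n // (j : ℕ) < i + 1} =>
        if h : (j : ℕ) < i then v.2.2 ⟨j, h⟩ else v.1)) ?_ fun ω => ?_
  · rintro ⟨a, m, v⟩ ⟨a', m', v'⟩ h
    simp only [Prod.mk.injEq, funext_iff] at h
    obtain ⟨rfl, h⟩ := h
    have ha := h ⟨i, Nat.lt_succ_self _⟩
    simp only [lt_irrefl, dite_false] at ha
    refine Prod.ext ha (Prod.ext rfl (funext fun j => ?_))
    simpa [j.2] using h ⟨j, Nat.lt_succ_of_lt j.2⟩
  · refine Prod.ext rfl (funext fun j => ?_)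
    dsimp only
    split_ifs with h
    · rfl
    · exact congrArg (Y ω) (Fin.ext (by omega))

theorem sum_entropy_initSeg_sub (w : Ω → ℝ) (M : Ω → T) (Y : Ω → Fin n → S) :
    ∑ i : Fin n, (entropy w (fun ω => (Y ω i, M ω, initSeg i (Y ω)))
        - entropy w (fun ω => (M ω, initSeg i (Y ω))))
      = entropy w (fun ω => (M ω, Y ω)) - entropy w M := by
  set h : ℕ → ℝ := fun k => entropy w (fun ω => (M ω, initSeg k (Y ω)))
  have hn : h n = entropy w (fun ω => (M ω, Y ω)) :=
    entropy_eq_of_injective (f := fun v : T × (Fin n → S) => (v.1, initSeg n v.2))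
      (fun a b hab => by
        simp only [Prod.mk.injEq, funext_iff] at hab
        exact Prod.ext hab.1 (funext fun j => hab.2 ⟨j, j.2⟩))
      fun ω => rfl
  have h0 : h 0 = entropy w M :=
    entropy_eq_of_injective (f := fun m : T => (m, fun j => absurd j.2 (Nat.not_lt_zero _)))
      (fun a b hab => congrArg Prod.fst hab)
      fun ω => Prod.ext rfl (funext fun j => absurd j.2 (Nat.not_lt_zero _))
  calc _ = ∑ i : Fin n, (h (i + 1) - h i) :=
        sum_congr rfl fun i _ => by simp only [h, entropy_initSeg_succ]
    _ = h n - h 0 := by rw [Fin.sum_univ_eq_sum_range (fun k => h (k + 1) - h k), sum_range_sub]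
    _ = _ := by rw [hn, h0]

theorem entropy_sub_entropy_le_sum_feedforward (hw : 0 ≤ w) (M : Ω → T) (Y : Ω → Fin n → S)
    (G : (i : Fin n) → T × ({j : Fin n // (j : ℕ) < i} → S) → U) :
    entropy w (fun ω => (M ω, Y ω)) - entropy w M
      ≤ ∑ i, (entropy w (fun ω => (Y ω i, G i (M ω, initSeg i (Y ω))))
        - entropy w (fun ω => G i (M ω, initSeg i (Y ω)))) := by
  rw [← sum_entropy_initSeg_sub]
  exact sum_le_sum fun i _ => entropy_pair_sub_entropy_le_comp hw _ _ (G i)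

end Conditioning

section Mixture

variable [Fintype ι]

lemma sum_mixture {c : ι → ℝ} (hc1 : ∑ i, c i = 1) (hw1 : ∑ ω, w ω = 1) :
    ∑ ω, mixture c w ω = 1 := by
  simp only [mixture, Fintype.sum_prod_type, ← mul_sum, hw1, mul_one, hc1]

lemma pushforward_mixture_uncurry (c : ι → ℝ) (w : Ω → ℝ) (F : ι → Ω → S) (s : S) :
    pushforward (mixture c w) (Function.uncurry F) s = ∑ i, c i * pushforward w (F i) s := by
  classical
  simp only [pushforward_apply, Fintype.sum_prod_type, mul_sum, Function.uncurry_apply_pair,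
    mixture, mul_ite, mul_zero]
  rfl

lemma pushforward_mixture_uncurry_index (c : ι → ℝ) (w : Ω → ℝ) (F : ι → Ω → S) (s : S) (i : ι) :
    pushforward (mixture c w) (fun ω => (Function.uncurry F ω, ω.1)) (s, i)
      = c i * pushforward w (F i) s := by
  classical
  simp only [pushforward_apply, Fintype.sum_prod_type, mul_sum, Function.uncurry_apply_pair,
    mixture, Prod.mk.injEq, mul_ite, mul_zero]
  rw [sum_eq_single i (fun j _ hj => by simp [hj]) (by simp)]
  simp

lemma sum_pushforward_mixture_mul [Fintype S] (c : ι → ℝ) (w : Ω → ℝ) (F : ι → Ω → S) (f : S → ℝ) :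
    ∑ s, pushforward (mixture c w) (Function.uncurry F) s * f s
      = ∑ i, c i * ∑ s, pushforward w (F i) s * f s := by
  simp_rw [pushforward_mixture_uncurry, sum_mul, mul_sum, mul_assoc]
  exact sum_comm

theorem entropy_mixture [Fintype S] (c : ι → ℝ) {w : Ω → ℝ} (hw1 : ∑ ω, w ω = 1) (F : ι → Ω → S) :
    entropy (mixture c w) (fun ω => (Function.uncurry F ω, ω.1))
      = ∑ i, c i * entropy w (F i) + entropy c id := by
  simp only [entropy, Fintype.sum_prod_type, pushforward_mixture_uncurry_index, negMulLog_mul,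
    sum_add_distrib, pushforward_id, mul_sum]
  rw [sum_comm, add_comm]
  congr 1
  · exact sum_comm
  · simp_rw [← sum_mul, sum_pushforward, hw1, one_mul]

theorem mutualInformation_mixture_le [Fintype S] [Fintype T] {c : ι → ℝ} (hc : 0 ≤ c)
    (hw : 0 ≤ w) (hw1 : ∑ ω, w ω = 1) (A : ι → Ω → S) (B : ι → Ω → T) :
    mutualInformation (mixture c w) (Function.uncurry A) (Function.uncurry B)
      ≤ entropy (mixture c w) (Function.uncurry A)
        - ∑ i, c i * (entropy w (fun ω => (A i ω, B i ω)) - entropy w (B i)) := by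
  have hsub := entropy_triple_add_entropy_le (mixture_nonneg hc hw) (Function.uncurry A) Prod.fst
    (Function.uncurry B)
  have hAB : entropy (mixture c w) (fun ω => (Function.uncurry A ω, ω.1, Function.uncurry B ω))
      = ∑ i, c i * entropy w (fun ω => (A i ω, B i ω)) + entropy c id :=
    (entropy_eq_of_injective (f := fun v : S × ι × T => ((v.1, v.2.2), v.2.1))
      (fun a b h => by simp only [Prod.mk.injEq] at h; exact Prod.ext h.1.1 (Prod.ext h.2 h.1.2))
      fun ω => rfl).symm.trans (entropy_mixture c hw1 fun i ω => (A i ω, B i ω))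
  have hB : entropy (mixture c w) (fun ω => (ω.1, Function.uncurry B ω))
      = ∑ i, c i * entropy w (B i) + entropy c id :=
    (entropy_eq_of_injective (f := fun v : ι × T => (v.2, v.1))
      (fun a b h => by simp only [Prod.mk.injEq] at h; exact Prod.ext h.2 h.1)
      fun ω => rfl).symm.trans (entropy_mixture c hw1 B)
  rw [hAB, hB] at hsub
  simp only [mutualInformation, mul_sub, sum_sub_distrib]
  linarith

end Mixture

section Product

variable [Fintype ι] [DecidableEq ι] [Fintype S]

theorem sum_pi_prod_mul_apply (p : ι → S → ℝ) (hp : ∀ j, ∑ a, p j a = 1) (i : ι) (f : S → ℝ) :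
    ∑ x : ι → S, (∏ j, p j (x j)) * f (x i) = ∑ a, p i a * f a := by
  have hx : ∀ x : ι → S,
      (∏ j, p j (x j)) * f (x i) = ∏ j, p j (x j) * (if j = i then f (x j) else 1) := by
    intro x
    rw [prod_mul_distrib, prod_ite_eq' univ i, if_pos (mem_univ i)]
  calc _ = ∑ x : ι → S, ∏ j, p j (x j) * (if j = i then f (x j) else 1) :=
        sum_congr rfl fun x _ => hx x
    _ = ∏ j, ∑ a, p j a * (if j = i then f a else 1) :=
        (Fintype.prod_sum fun j a => p j a * if j = i then f a else 1).symm
    _ = _ := by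
      rw [Fintype.prod_eq_single i fun j hj => by simp [hj, hp]]
      simp

lemma sum_pi_prod (p : ι → S → ℝ) (hp : ∀ j, ∑ a, p j a = 1) :
    ∑ x : ι → S, ∏ j, p j (x j) = 1 := by
  rw [← Fintype.prod_sum]
  simp [hp]

lemma pushforward_pi_eval (p : ι → S → ℝ) (hp : ∀ j, ∑ a, p j a = 1) (i : ι) :
    pushforward (fun x : ι → S => ∏ j, p j (x j)) (fun x => x i) = p i := by
  classical
  ext a
  simpa [pushforward_apply, mul_ite] using
    sum_pi_prod_mul_apply p hp i fun b => if b = a then 1 else 0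

theorem entropy_pi (p : ι → S → ℝ) (hp : ∀ j, ∑ a, p j a = 1) :
    entropy (fun x : ι → S => ∏ j, p j (x j)) id = ∑ i, entropy (p i) id := by
  have hlog : ∀ x : ι → S,
      negMulLog (∏ j, p j (x j)) = ∑ i, (∏ j, p j (x j)) * -log (p i (x i)) := by
    intro x
    by_cases h : ∃ j, p j (x j) = 0
    · obtain ⟨j, hj⟩ := h
      simp [prod_eq_zero (f := fun j => p j (x j)) (mem_univ j) hj]
    · push Not at h
      rw [negMulLog, log_prod fun j _ => h j, mul_sum]
      simp only [neg_mul, mul_neg]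
  simp_rw [entropy_id, hlog]
  rw [sum_comm]
  refine sum_congr rfl fun i _ => ?_
  rw [sum_pi_prod_mul_apply p hp i fun a => -log (p i a)]
  simp only [negMulLog, neg_mul, mul_neg]

lemma pushforward_mixture_iid_eval {c : ι → ℝ} (hc1 : ∑ i, c i = 1) (p : S → ℝ)
    (hp : ∑ a, p a = 1) :
    pushforward (mixture c fun x : ι → S => ∏ j, p (x j)) (Function.uncurry fun i x => x i)
      = p := by
  ext a
  rw [pushforward_mixture_uncurry]
  simp_rw [pushforward_pi_eval (fun _ => p) (fun _ => hp)]
  rw [← sum_mul, hc1, one_mul]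

end Product

theorem mutualInformation_timeSharing_le [Fintype S] [Fintype T] [Fintype U] {n : ℕ} (hn : 0 < n)
    (p : S → ℝ) (hp0 : 0 ≤ p) (hp1 : ∑ a, p a = 1) (e : (Fin n → S) → T)
    (G : (i : Fin n) → T × ({j : Fin n // (j : ℕ) < i} → S) → U) :
    mutualInformation (mixture (fun _ => (n : ℝ)⁻¹) fun x : Fin n → S => ∏ j, p (x j))
        (Function.uncurry fun i x => x i) (Function.uncurry fun i x => G i (e x, initSeg i x))
      ≤ (n : ℝ)⁻¹ * log (Fintype.card T) := by
  set w := fun x : Fin n → S => ∏ j, p (x j)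
  have hw : 0 ≤ w := fun x => prod_nonneg fun j _ => hp0 _
  have hw1 : ∑ x, w x = 1 := sum_pi_prod (fun _ => p) fun _ => hp1
  have hc1 : ∑ _ : Fin n, (n : ℝ)⁻¹ = 1 := by simp [hn.ne']
  have hmix := mutualInformation_mixture_le (c := fun _ : Fin n => (n : ℝ)⁻¹)
    (fun _ => inv_nonneg.mpr n.cast_nonneg) hw hw1 (fun i x => x i)
    fun i x => G i (e x, initSeg i x)
  have hchain := entropy_sub_entropy_le_sum_feedforward hw e id G
  dsimp only [id] at hchain
  have hXJ : entropy (mixture (fun _ => (n : ℝ)⁻¹) w) (Function.uncurry fun i x => x i)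
      = ∑ a, negMulLog (p a) := by
    rw [entropy, pushforward_mixture_iid_eval hc1 p hp1]
  have hblock : entropy w (fun x => (e x, x)) = n * ∑ a, negMulLog (p a) := by
    rw [entropy_eq_of_injective (X := id) (Y := fun x => (e x, x)) (f := fun x => (e x, x))
      (fun a b h => congrArg Prod.snd h) fun _ => rfl, entropy_pi (fun _ => p) fun _ => hp1]
    simp [entropy_id]
  rw [← mul_sum, hXJ] at hmix
  rw [hblock] at hchain
  have hn' : (0 : ℝ) < n := by exact_mod_cast hn
  calc _ ≤ _ := hmix
    _ ≤ ∑ a, negMulLog (p a) - (n : ℝ)⁻¹ * (n * ∑ a, negMulLog (p a) - entropy w e) := by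
      gcongr
    _ = (n : ℝ)⁻¹ * entropy w e := by field_simp; ring
    _ ≤ (n : ℝ)⁻¹ * log (Fintype.card T) := by gcongr; exact entropy_le_log_card hw hw1 e

section Measure

open MeasureTheory

variable [MeasurableSpace Ω]

noncomputable def weightMeasure (w : Ω → ℝ) : Measure Ω :=
  ∑ ω, ENNReal.ofReal (w ω) • Measure.dirac ω

lemma weightMeasure_apply_toReal [MeasurableSingletonClass Ω] (hw : 0 ≤ w) (A : Set Ω) :
    (weightMeasure w A).toReal = ∑ ω, A.indicator w ω := by
  have hterm : ∀ ω,
      (ENNReal.ofReal (w ω) • Measure.dirac ω) A = ENNReal.ofReal (A.indicator w ω) := by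
    intro ω
    rw [Measure.smul_apply, Measure.dirac_apply, smul_eq_mul]
    by_cases h : ω ∈ A <;> simp [h]
  have hnonneg : ∀ ω, 0 ≤ A.indicator w ω := Set.indicator_nonneg fun ω _ => hw ω
  rw [weightMeasure, Measure.finsetSum_apply, sum_congr rfl fun ω _ => hterm ω,
    ← ENNReal.ofReal_sum_of_nonneg fun ω _ => hnonneg ω,
    ENNReal.toReal_ofReal (sum_nonneg fun ω _ => hnonneg ω)]

lemma isProbabilityMeasure_weightMeasure [MeasurableSingletonClass Ω] (hw : 0 ≤ w)
    (hw1 : ∑ ω, w ω = 1) : IsProbabilityMeasure (weightMeasure w) := by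
  refine ⟨(ENNReal.toReal_eq_one_iff _).mp ?_⟩
  simpa [weightMeasure_apply_toReal hw] using hw1

lemma mutualInfo_weightMeasure [MeasurableSingletonClass Ω] [Fintype S] [Fintype T] (hw : 0 ≤ w)
    (X : Ω → S) (Y : Ω → T) :
    mutualInfo (weightMeasure w) X Y = mutualInformation w X Y := by
  simp only [mutualInfo, condEntropy, shannonEntropy, weightMeasure_apply_toReal hw,
    mutualInformation, entropy, pushforward]
  ring

lemma toReal_measure_preimage_comp {E α β : Type*} [MeasurableSpace E] [Fintype α] {μ : Measure E}
    [IsFiniteMeasure μ] {V : E → α} (hV : ∀ x, MeasurableSet (V ⁻¹' {x})) {w : α → ℝ}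
    (hVw : ∀ x, (μ (V ⁻¹' {x})).toReal = w x) (F : α → β) (s : β) :
    (μ ((fun ω => F (V ω)) ⁻¹' {s})).toReal = pushforward w F s := by
  classical
  have hset : (fun ω => F (V ω)) ⁻¹' {s} = V ⁻¹' ↑(univ.filter fun x => F x = s) := by
    ext; simp
  rw [hset, ← measureReal_def, ← sum_measureReal_preimage_singleton _ fun x _ => hV x,
    pushforward_apply, ← sum_filter]
  exact sum_congr rfl fun x _ => hVw x

lemma toReal_measure_comp_pi_eq {E α β : Type*} [MeasurableSpace E] [Fintype ι] [DecidableEq ι]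
    [Fintype α] {μ : Measure E} [IsFiniteMeasure μ] {X : ι → E → α}
    (hX : ∀ i a, MeasurableSet (X i ⁻¹' {a})) {w : (ι → α) → ℝ}
    (hXw : ∀ x, (μ {ω | ∀ i, X i ω = x i}).toReal = w x) (F : (ι → α) → β) (s : β) :
    (μ {ω | F (fun i => X i ω) = s}).toReal = pushforward w F s := by
  refine toReal_measure_preimage_comp (V := fun ω i => X i ω) (fun x => ?_)
    (fun x => by simpa [Set.preimage, funext_iff] using hXw x) F s
  simpa [Set.preimage, funext_iff, Set.ofPred_forall] using
    MeasurableSet.iInter fun i => hX i (x i)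

theorem rdFun_le_ofReal_mutualInformation {𝒳 𝒳' Ω : Type} [Fintype 𝒳] [Fintype 𝒳'] [Fintype Ω]
    {p : 𝒳 → ℝ} {d : 𝒳 → 𝒳' → ℝ} {D : ℝ} {w : Ω → ℝ} (hw : 0 ≤ w) (hw1 : ∑ ω, w ω = 1)
    (X : Ω → 𝒳) (Q : Ω → 𝒳') (hX : pushforward w X = p)
    (hD : ∑ a, ∑ b, pushforward w (fun ω => (X ω, Q ω)) (a, b) * d a b ≤ D) :
    rdFun p d D ≤ ENNReal.ofReal (mutualInformation w X Q) := by
  let : MeasurableSpace Ω := ⊤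
  refine sInf_le ⟨Ω, ⊤, weightMeasure w, isProbabilityMeasure_weightMeasure hw hw1, X, Q,
    fun _ => trivial, fun _ => trivial, fun a => ?_, ?_, by rw [mutualInfo_weightMeasure hw]⟩
  · rw [weightMeasure_apply_toReal hw, ← hX]
    rfl
  · simpa only [weightMeasure_apply_toReal hw, pushforward, ← Set.singleton_prod_singleton,
      Set.mk_preimage_prod] using hD

end Measure

end FiniteWeight

open FiniteWeight

theorem feedforward_rate_distortion_converse_general
    {𝒳 𝒳' : Type} [Fintype 𝒳] [Fintype 𝒳']
    (p : 𝒳 → ℝ) (hp0 : ∀ a, 0 ≤ p a) (hp1 : ∑ a, p a = 1)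
    (d : 𝒳 → 𝒳' → ℝ)
    {Ω : Type} [MeasurableSpace Ω] (μ : Measure Ω) [IsProbabilityMeasure μ]
    (n N : ℕ) (hn : 0 < n)
    (X : Fin n → Ω → 𝒳)
    (hXmeas : ∀ i a, MeasurableSet ((X i) ⁻¹' {a}))
    (hiid : ∀ x : Fin n → 𝒳,
      (μ {ω | ∀ i, X i ω = x i}).toReal = ∏ i, p (x i))
    (e : (Fin n → 𝒳) → Fin N)
    (g : (i : Fin n) → Fin N → (Fin i.val → 𝒳) → 𝒳')
    (Xhat : Fin n → Ω → 𝒳')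
    (hXhat : ∀ i ω, Xhat i ω =
      g i (e (fun j => X j ω)) (fun j => X ⟨j.val, j.isLt.trans i.isLt⟩ ω))
    (Dbar : ℝ)
    (hDbar : Dbar = (1 / n : ℝ) * ∑ i : Fin n, ∑ a : 𝒳, ∑ b : 𝒳',
      (μ {ω | X i ω = a ∧ Xhat i ω = b}).toReal * d a b) :
    rdFun p d Dbar ≤ ENNReal.ofReal ((1 / n : ℝ) * Real.log N) := by
  classical
  set w : (Fin n → 𝒳) → ℝ := fun x => ∏ j, p (x j)
  set Q : Fin n → (Fin n → 𝒳) → 𝒳' := fun i x => g i (e x) fun j => x ⟨j, j.isLt.trans i.isLt⟩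
  have hlaw : ∀ i a b, (μ {ω | X i ω = a ∧ Xhat i ω = b}).toReal
      = pushforward w (fun x => (x i, Q i x)) (a, b) := fun i a b => by
    rw [← toReal_measure_comp_pi_eq hXmeas hiid]
    simp [hXhat, Q]
  have hc1 : ∑ _ : Fin n, (n : ℝ)⁻¹ = 1 := by simp [hn.ne']
  have hw1 : ∑ x, w x = 1 := sum_pi_prod (fun _ => p) fun _ => hp1
  refine (rdFun_le_ofReal_mutualInformation
    (mixture_nonneg (fun _ => inv_nonneg.mpr n.cast_nonneg) fun x => prod_nonneg fun j _ => hp0 _)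
    (sum_mixture hc1 hw1) _ (Function.uncurry Q) (pushforward_mixture_iid_eval hc1 p hp1)
    (le_of_eq ?_)).trans (ENNReal.ofReal_le_ofReal ?_)
  · calc _ = ∑ ab : 𝒳 × 𝒳', pushforward (mixture (fun _ => (n : ℝ)⁻¹) w)
            (Function.uncurry fun i x => (x i, Q i x)) ab * d ab.1 ab.2 :=
          (Fintype.sum_prod_type _).symm
      _ = _ := sum_pushforward_mixture_mul _ _ _ _
      _ = Dbar := by simp_rw [hDbar, Fintype.sum_prod_type, hlaw, one_div, mul_sum]
  · rw [one_div, ← Fintype.card_fin N]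
    exact mutualInformation_timeSharing_le hn p hp0 hp1 e
      fun i v => g i v.1 fun j => v.2 ⟨⟨j, j.isLt.trans i.isLt⟩, j.isLt⟩

/-- Converse for source coding with unit-lag feedforward side information:
for an i.i.d. source `X₁,…,Xₙ` with per-letter pmf `p`, an encoder `e` into
`Fin N`, and decoders `gᵢ` which see the message `M = e(X₁,…,Xₙ)` together with
the first `i − 1` source samples and produce `X̂ᵢ = gᵢ(M, X₁,…,X_{i−1})`, the
rate satisfies `(1/n)·log N ≥ R(D̄)` where
`D̄ = (1/n)·Σᵢ E[d(Xᵢ, X̂ᵢ)]` is the average distortion. -/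
theorem feedforward_rate_distortion_converse
    {𝒳 𝒳' : Type} [Fintype 𝒳] [Fintype 𝒳'] [Nonempty 𝒳] [Nonempty 𝒳']
    (p : 𝒳 → ℝ) (hp0 : ∀ a, 0 ≤ p a) (hp1 : ∑ a, p a = 1)
    (d : 𝒳 → 𝒳' → ℝ) (hd : ∀ a b, 0 ≤ d a b)
    {Ω : Type} [MeasurableSpace Ω] (μ : Measure Ω) [IsProbabilityMeasure μ]
    (n N : ℕ) (hn : 0 < n)
    (X : Fin n → Ω → 𝒳)
    (hXmeas : ∀ i a, MeasurableSet ((X i) ⁻¹' {a}))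
    (hiid : ∀ x : Fin n → 𝒳,
      (μ {ω | ∀ i, X i ω = x i}).toReal = ∏ i, p (x i))
    (e : (Fin n → 𝒳) → Fin N)
    (g : (i : Fin n) → Fin N → (Fin i.val → 𝒳) → 𝒳')
    (Xhat : Fin n → Ω → 𝒳')
    (hXhat : ∀ i ω, Xhat i ω =
      g i (e (fun j => X j ω)) (fun j => X ⟨j.val, j.isLt.trans i.isLt⟩ ω))
    (Dbar : ℝ)
    (hDbar : Dbar = (1 / n : ℝ) * ∑ i : Fin n, ∑ a : 𝒳, ∑ b : 𝒳',
      (μ {ω | X i ω = a ∧ Xhat i ω = b}).toReal * d a b) :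
    rdFun p d Dbar ≤ ENNReal.ofReal ((1 / n : ℝ) * Real.log N) :=
  feedforward_rate_distortion_converse_general p hp0 hp1 d μ n N hn X hXmeas hiid e g Xhat hXhat
    Dbar hDbar
end

section
/- Let 𝒳 and 𝒳̂ be finite nonempty alphabets and let X₁,…,Xₙ be i.i.d. random variables with values in 𝒳. Let e : 𝒳ⁿ → Fin N be an encoder and for each i let gᵢ : Fin N × 𝒳^{i−1} → 𝒳̂ be a decoder; set M = e(X₁,…,Xₙ) and X̂ᵢ = gᵢ(M, X₁,…,X_{i−1}). Then log N ≥ Σ_{i=1}^n ( H[Xᵢ] − H[Xᵢ | X̂ᵢ] ), i.e. log N ≥ Σ_{i=1}^n I[Xᵢ ; X̂ᵢ]. -/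
open MeasureTheory

/-! Since `M = e(Xⁿ)` is a function of `Xⁿ`, the chain rule gives
`H[Xⁿ] - H[M] = H[Xⁿ | M] = ∑ᵢ H[Xᵢ | M, X^{i-1}]`. The reconstruction `X̂ᵢ` is a function of
`(M, X^{i-1})`, and conditioning on a function of a variable can only increase entropy, so
`H[Xᵢ | M, X^{i-1}] ≤ H[Xᵢ | X̂ᵢ]`. Independence gives `H[Xⁿ] = ∑ᵢ H[Xᵢ]`, hence
`∑ᵢ (H[Xᵢ] - H[Xᵢ | X̂ᵢ]) ≤ H[M] ≤ log N`. Both inequalities on entropies are instances of the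
log-sum inequality. -/

open Finset Real Function

section LogSum

variable {ι : Type*}

theorem mul_log_div_le_mul_log_add {a b c : ℝ} (ha : 0 ≤ a) (hb : 0 ≤ b) (hc : 0 < c)
    (hab : b = 0 → a = 0) : a * log (b / a) ≤ a * log c + (b / c - a) := by
  rcases ha.eq_or_lt with rfl | ha
  · simpa using div_nonneg hb hc.le
  have hb : 0 < b := hb.lt_of_ne fun h => ha.ne' (hab h.symm)
  have key : log (b / a) - log c = log (b / (a * c)) := by
    rw [← log_div (by positivity) hc.ne', div_div]
  calc a * log (b / a) = a * log c + a * log (b / (a * c)) := by rw [← key]; ring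
    _ ≤ a * log c + a * (b / (a * c) - 1) := by
        gcongr
        exact log_le_sub_one_of_pos (by positivity)
    _ = a * log c + (b / c - a) := by field_simp

/-- The log-sum inequality. `hab` cannot be dropped: with `log 0 = 0`, a term with `b i = 0 < a i`
would count as `0` instead of `-∞`. -/
theorem sum_mul_log_div_le {s : Finset ι} {a b : ι → ℝ} (ha : ∀ i ∈ s, 0 ≤ a i)
    (hb : ∀ i ∈ s, 0 ≤ b i) (hab : ∀ i ∈ s, b i = 0 → a i = 0) :
    ∑ i ∈ s, a i * log (b i / a i) ≤ (∑ i ∈ s, a i) * log ((∑ i ∈ s, b i) / ∑ i ∈ s, a i) := by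
  set A := ∑ i ∈ s, a i
  set B := ∑ i ∈ s, b i
  rcases (sum_nonneg ha).eq_or_lt with hA | hA
  · rw [show A = 0 from hA.symm, zero_mul]
    refine (sum_eq_zero fun i hi => ?_).le
    rw [(sum_eq_zero_iff_of_nonneg ha).1 hA.symm i hi, zero_mul]
  have hB : 0 < B := (sum_nonneg hb).lt_of_ne fun hB => hA.ne' <|
    sum_eq_zero fun i hi => hab i hi ((sum_eq_zero_iff_of_nonneg hb).1 hB.symm i hi)
  calc ∑ i ∈ s, a i * log (b i / a i)
      ≤ ∑ i ∈ s, (a i * log (B / A) + (b i / (B / A) - a i)) :=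
        sum_le_sum fun i hi => mul_log_div_le_mul_log_add (ha i hi) (hb i hi) (by positivity)
          (hab i hi)
    _ = A * log (B / A) := by
        rw [sum_add_distrib, sum_sub_distrib, ← sum_mul, ← sum_div]
        field_simp
        ring

theorem sum_negMulLog_sub_negMulLog_sum {s : Finset ι} {r : ι → ℝ} (hr : ∀ i ∈ s, 0 ≤ r i) :
    ∑ i ∈ s, negMulLog (r i) - negMulLog (∑ i ∈ s, r i)
      = ∑ i ∈ s, r i * log ((∑ j ∈ s, r j) / r i) := by
  have term : ∀ i ∈ s, r i * log ((∑ j ∈ s, r j) / r i)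
      = negMulLog (r i) + r i * log (∑ j ∈ s, r j) := by
    intro i hi
    rcases (hr i hi).eq_or_lt with h | h
    · simp [← h]
    have hR : 0 < ∑ j ∈ s, r j := h.trans_le (single_le_sum hr hi)
    rw [log_div hR.ne' h.ne', negMulLog]
    ring
  rw [sum_congr rfl term, sum_add_distrib, ← sum_mul, negMulLog]
  ring

theorem sum_negMulLog_le_log_card [Fintype ι] {a : ι → ℝ} (ha : ∀ i, 0 ≤ a i)
    (ha1 : ∑ i, a i = 1) : ∑ i, negMulLog (a i) ≤ log (Fintype.card ι) := by
  have := sum_mul_log_div_le (s := univ) (a := a) (b := fun _ => 1) (fun i _ => ha i)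
    (fun _ _ => zero_le_one) (fun _ _ h => absurd h one_ne_zero)
  simp only [one_div, log_inv, ha1, sum_const, card_univ, nsmul_eq_mul, mul_one, div_one,
    one_mul] at this
  simpa [negMulLog] using this

end LogSum

section ProductWeights

variable {ι α : Type*} [DecidableEq ι]

theorem negMulLog_prod (s : Finset ι) (f : ι → ℝ) :
    negMulLog (∏ i ∈ s, f i) = ∑ i ∈ s, negMulLog (f i) * ∏ j ∈ s.erase i, f j := by
  induction s using Finset.induction_on with
  | empty => simp
  | insert a s ha ih =>
    have erase_insert : ∀ i ∈ s, ∏ j ∈ (insert a s).erase i, f j = f a * ∏ j ∈ s.erase i, f j :=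
      fun i hi => by
        rw [erase_insert_of_ne (ne_of_mem_of_not_mem hi ha).symm,
          prod_insert fun h => ha (mem_of_mem_erase h)]
    rw [prod_insert ha, sum_insert ha, negMulLog_mul, ih, erase_insert_eq_erase,
      erase_eq_of_notMem ha, mul_sum, mul_comm]
    exact congrArg _ (sum_congr rfl fun i hi => by rw [erase_insert i hi]; ring)

variable [Fintype ι] [Fintype α] {p : ι → α → ℝ}

theorem sum_mul_prod_erase_eq_sum (hp : ∀ i, ∑ a, p i a = 1) (i : ι) (h : α → ℝ) :
    ∑ x : ι → α, h (x i) * ∏ j ∈ univ.erase i, p j (x j) = ∑ a, h a := by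
  let q : ι → α → ℝ := fun j a => if j = i then h a else p j a
  have split : ∀ y : ι → ℝ, ∏ j, y j = y i * ∏ j ∈ univ.erase i, y j :=
    fun y => (mul_prod_erase univ y (mem_univ i)).symm
  have erase_q : ∀ y : ι → α, ∏ j ∈ univ.erase i, q j (y j) = ∏ j ∈ univ.erase i, p j (y j) :=
    fun y => prod_congr rfl fun j hj => if_neg (ne_of_mem_erase hj)
  calc ∑ x : ι → α, h (x i) * ∏ j ∈ univ.erase i, p j (x j)
      = ∑ x : ι → α, ∏ j, q j (x j) :=
        sum_congr rfl fun x _ => by rw [split, erase_q]; simp [q]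
    _ = ∏ j, ∑ a, q j a := (Fintype.prod_sum q).symm
    _ = ∑ a, h a := by
        rw [split, prod_congr rfl fun j hj =>
          show ∑ a, q j a = 1 by simp [q, ne_of_mem_erase hj, hp]]
        simp [q]

theorem sum_filter_prod_eq [DecidableEq α] (hp : ∀ i, ∑ a, p i a = 1) (i : ι) (a : α) :
    ∑ x ∈ univ.filter (fun x : ι → α => x i = a), ∏ j, p j (x j) = p i a := by
  rw [sum_filter]
  convert sum_mul_prod_erase_eq_sum hp i (fun b => if b = a then p i b else 0) using 1
  · exact sum_congr rfl fun x _ => by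
      rw [← mul_prod_erase univ _ (mem_univ i)]
      split_ifs <;> simp
  · simp

theorem sum_negMulLog_prod_eq (hp : ∀ i, ∑ a, p i a = 1) :
    ∑ x : ι → α, negMulLog (∏ i, p i (x i)) = ∑ i, ∑ a, negMulLog (p i a) := by
  simp_rw [negMulLog_prod]
  rw [sum_comm]
  exact sum_congr rfl fun i _ => sum_mul_prod_erase_eq_sum hp i (fun a => negMulLog (p i a))

end ProductWeights

theorem Fin.sum_succ_sub_castSucc {M : Type*} [AddCommGroup M] {n : ℕ} (a : Fin (n + 1) → M) :
    ∑ i : Fin n, (a i.succ - a i.castSucc) = a (Fin.last n) - a 0 := by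
  induction n with
  | zero => simp
  | succ n ih =>
    rw [Fin.sum_univ_castSucc]
    simp only [Fin.succ_castSucc]
    rw [ih (fun k => a k.castSucc), Fin.castSucc_zero, Fin.succ_last]
    abel

section Entropy

variable {Ω S T U : Type*} [MeasurableSpace Ω] [Fintype S] [Fintype T] {μ : Measure Ω}

theorem shannonEntropy_eq_sum_measureReal (X : Ω → S) :
    shannonEntropy μ X = ∑ s, negMulLog (μ.real (X ⁻¹' {s})) := rfl

theorem shannonEntropy_comp_of_injective (X : Ω → S) {f : S → T} (hf : Injective f) :
    shannonEntropy μ (fun ω => f (X ω)) = shannonEntropy μ X := by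
  refine (Fintype.sum_of_injective f hf _ _ (fun t ht => ?_) fun s => ?_).symm
  · rw [show (fun ω => f (X ω)) ⁻¹' {t} = ∅ from
      Set.eq_empty_of_forall_notMem fun ω hω => ht ⟨X ω, hω⟩]
    simp
  · congr 3
    ext ω
    simp [hf.eq_iff]

theorem condEntropy_comp_self_eq_sub (X : Ω → S) (f : S → T) :
    condEntropy μ X (fun ω => f (X ω))
      = shannonEntropy μ X - shannonEntropy μ (fun ω => f (X ω)) := by
  rw [condEntropy, shannonEntropy_comp_of_injective X (f := fun x => (x, f x))
    fun x y h => congrArg Prod.fst h]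

theorem condEntropy_eq_sum_condEntropy_take {n : ℕ} (Z : Ω → Fin n → S) (W : Ω → T) :
    condEntropy μ Z W = ∑ i : Fin n,
      condEntropy μ (fun ω => Z ω i) (fun ω => (W ω, Fin.take i i.isLt.le (Z ω))) := by
  let a : Fin (n + 1) → ℝ := fun k => shannonEntropy μ (fun ω => (W ω, Fin.take k k.is_le (Z ω)))
  have step : ∀ i : Fin n,
      condEntropy μ (fun ω => Z ω i) (fun ω => (W ω, Fin.take i i.isLt.le (Z ω)))
        = a i.succ - a i.castSucc := fun i => by
    have snoc_injective : Injective fun x : S × T × (Fin i → S) =>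
        (x.2.1, Fin.snoc (α := fun _ => S) x.2.2 x.1) := fun ⟨_, _, _⟩ ⟨_, _, _⟩ h => by
      obtain ⟨rfl, h⟩ := Prod.mk.inj h
      obtain ⟨rfl, rfl⟩ := Fin.snoc_injective2 h
      rfl
    rw [condEntropy, ← shannonEntropy_comp_of_injective _ snoc_injective]
    congr 2
    funext ω
    exact congrArg _ (Fin.take_succ_eq_snoc i.val i.isLt (Z ω)).symm
  rw [sum_congr rfl fun i _ => step i, Fin.sum_succ_sub_castSucc, condEntropy]
  congr 1
  · rw [← shannonEntropy_comp_of_injective _ Prod.swap_injective]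
    rfl
  · rw [← shannonEntropy_comp_of_injective W (f := fun w => (w, (Fin.elim0 : Fin 0 → S)))
      fun _ _ h => congrArg Prod.fst h]
    congr 2
    funext ω
    exact congrArg _ (funext fun i => i.elim0)

theorem measurableSet_preimage_comp_singleton {Y : Ω → T}
    (hY : ∀ t, MeasurableSet (Y ⁻¹' {t})) (f : T → U) (u : U) :
    MeasurableSet ((fun ω => f (Y ω)) ⁻¹' {u}) := by
  have := MeasurableSet.biUnion (Set.to_countable (f ⁻¹' {u})) fun t _ => hY t
  rwa [Set.biUnion_preimage_singleton] at this

theorem shannonEntropy_le_log_card [IsProbabilityMeasure μ] {Y : Ω → T}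
    (hY : ∀ t, MeasurableSet (Y ⁻¹' {t})) : shannonEntropy μ Y ≤ log (Fintype.card T) :=
  sum_negMulLog_le_log_card (fun _ => measureReal_nonneg) <| by
    show ∑ t, μ.real (Y ⁻¹' {t}) = 1
    rw [sum_measureReal_preimage_singleton _ fun t _ => hY t]
    simp

variable [IsFiniteMeasure μ]

theorem measureReal_preimage_comp_singleton [DecidableEq U] {Y : Ω → T}
    (hY : ∀ t, MeasurableSet (Y ⁻¹' {t})) (f : T → U) (u : U) :
    μ.real ((fun ω => f (Y ω)) ⁻¹' {u})
      = ∑ t ∈ univ.filter (fun t => f t = u), μ.real (Y ⁻¹' {t}) := by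
  rw [sum_measureReal_preimage_singleton _ fun t _ => hY t]
  congr 1
  ext ω
  simp

theorem condEntropy_eq_sum_mul_log {X : Ω → S} {Y : Ω → T}
    (hXY : ∀ st, MeasurableSet ((fun ω => (X ω, Y ω)) ⁻¹' {st})) :
    condEntropy μ X Y = ∑ t, ∑ s, μ.real ((fun ω => (X ω, Y ω)) ⁻¹' {(s, t)})
      * log (μ.real (Y ⁻¹' {t}) / μ.real ((fun ω => (X ω, Y ω)) ⁻¹' {(s, t)})) := by
  classical
  have marginal : ∀ t, μ.real (Y ⁻¹' {t})
      = ∑ s, μ.real ((fun ω => (X ω, Y ω)) ⁻¹' {(s, t)}) := fun t => by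
    refine (measureReal_preimage_comp_singleton hXY Prod.snd t).trans ?_
    rw [sum_filter, Fintype.sum_prod_type]
    simp
  rw [condEntropy, shannonEntropy_eq_sum_measureReal, shannonEntropy_eq_sum_measureReal,
    Fintype.sum_prod_type, sum_comm, ← sum_sub_distrib]
  refine sum_congr rfl fun t _ => ?_
  rw [marginal t, sum_negMulLog_sub_negMulLog_sum fun s _ => measureReal_nonneg]

theorem condEntropy_le_condEntropy_comp [Fintype U] {X : Ω → S} {Y : Ω → T}
    (hXY : ∀ st, MeasurableSet ((fun ω => (X ω, Y ω)) ⁻¹' {st})) (f : T → U) :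
    condEntropy μ X Y ≤ condEntropy μ X (fun ω => f (Y ω)) := by
  classical
  set r : S → T → ℝ := fun s t => μ.real ((fun ω => (X ω, Y ω)) ⁻¹' {(s, t)})
  have hY : ∀ t, MeasurableSet (Y ⁻¹' {t}) := measurableSet_preimage_comp_singleton hXY Prod.snd
  have hXfY : ∀ su, MeasurableSet ((fun ω => (X ω, f (Y ω))) ⁻¹' {su}) :=
    measurableSet_preimage_comp_singleton hXY (Prod.map id f)
  have joint : ∀ s u, μ.real ((fun ω => (X ω, f (Y ω))) ⁻¹' {(s, u)})
      = ∑ t ∈ univ.filter (fun t => f t = u), r s t := fun s u => by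
    refine (measureReal_preimage_comp_singleton hXY (Prod.map id f) (s, u)).trans ?_
    rw [sum_filter, sum_filter, Fintype.sum_prod_type]
    simp [r, Prod.ext_iff, ite_and]
  have support : ∀ s t, μ.real (Y ⁻¹' {t}) = 0 → r s t = 0 := fun s t h =>
    le_antisymm (h ▸ measureReal_mono fun ω hω => congrArg Prod.snd hω) measureReal_nonneg
  rw [condEntropy_eq_sum_mul_log hXY, condEntropy_eq_sum_mul_log hXfY]
  simp_rw [joint, measureReal_preimage_comp_singleton hY f]
  calc ∑ t, ∑ s, r s t * log (μ.real (Y ⁻¹' {t}) / r s t)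
      = ∑ u, ∑ s, ∑ t ∈ univ.filter (fun t => f t = u),
          r s t * log (μ.real (Y ⁻¹' {t}) / r s t) := by
        rw [← sum_fiberwise univ f]
        exact sum_congr rfl fun u _ => sum_comm
    _ ≤ _ := sum_le_sum fun u _ => sum_le_sum fun s _ =>
        sum_mul_log_div_le (fun _ _ => measureReal_nonneg) (fun _ _ => measureReal_nonneg)
          fun t _ => support s t

theorem shannonEntropy_pi_eq_sum_of_measureReal_eq_prod {ι : Type*} [Fintype ι] [DecidableEq ι]
    {Z : Ω → ι → S} (hZ : ∀ x, MeasurableSet (Z ⁻¹' {x})) {p : ι → S → ℝ}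
    (hp : ∀ i, ∑ a, p i a = 1) (hZp : ∀ x, μ.real (Z ⁻¹' {x}) = ∏ i, p i (x i)) :
    shannonEntropy μ Z = ∑ i, shannonEntropy μ (fun ω => Z ω i) := by
  classical
  have marginal : ∀ i a, μ.real ((fun ω => Z ω i) ⁻¹' {a}) = p i a := fun i a => by
    rw [measureReal_preimage_comp_singleton hZ (fun x => x i), ← sum_filter_prod_eq hp i a]
    exact sum_congr rfl fun x _ => hZp x
  simp only [shannonEntropy_eq_sum_measureReal, hZp, marginal]
  exact sum_negMulLog_prod_eq hp

end Entropy

theorem feedforward_sum_mutualInfo_le_log_general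
    {𝒳 𝒳' : Type} [Fintype 𝒳] [Fintype 𝒳']
    (p : 𝒳 → ℝ) (hp1 : ∑ a, p a = 1)
    {Ω : Type} [MeasurableSpace Ω] (μ : Measure Ω) [IsProbabilityMeasure μ]
    (n N : ℕ) (X : Fin n → Ω → 𝒳)
    (hXmeas : ∀ i a, MeasurableSet ((X i) ⁻¹' {a}))
    (hiid : ∀ x : Fin n → 𝒳,
      (μ {ω | ∀ i, X i ω = x i}).toReal = ∏ i, p (x i))
    (e : (Fin n → 𝒳) → Fin N)
    (g : (i : Fin n) → Fin N → (Fin i.val → 𝒳) → 𝒳')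
    (Xhat : Fin n → Ω → 𝒳')
    (hXhat : ∀ i ω, Xhat i ω =
      g i (e (fun j => X j ω)) (fun j => X ⟨j.val, j.isLt.trans i.isLt⟩ ω)) :
    ∑ i : Fin n, (shannonEntropy μ (X i) - condEntropy μ (X i) (Xhat i))
      ≤ Real.log N := by
  classical
  set Z : Ω → Fin n → 𝒳 := fun ω i => X i ω
  set M : Ω → Fin N := fun ω => e (Z ω)
  have hZ_fiber : ∀ x, Z ⁻¹' {x} = {ω | ∀ i, X i ω = x i} := fun x => Set.ext fun _ => funext_iff
  have hZ : ∀ x, MeasurableSet (Z ⁻¹' {x}) := fun x => by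
    rw [hZ_fiber, Set.ofPred_forall]
    exact MeasurableSet.iInter fun i => hXmeas i (x i)
  have independent : shannonEntropy μ Z = ∑ i, shannonEntropy μ (X i) :=
    shannonEntropy_pi_eq_sum_of_measureReal_eq_prod hZ (p := fun _ => p) (fun _ => hp1)
      fun x => by rw [← hiid, hZ_fiber]; rfl
  have chain : shannonEntropy μ Z - shannonEntropy μ M
      = ∑ i, condEntropy μ (X i) (fun ω => (M ω, Fin.take i i.isLt.le (Z ω))) := by
    rw [← condEntropy_comp_self_eq_sub, condEntropy_eq_sum_condEntropy_take]
  have decoding : ∀ i, condEntropy μ (X i) (fun ω => (M ω, Fin.take i i.isLt.le (Z ω)))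
      ≤ condEntropy μ (X i) (Xhat i) := fun i => by
    rw [show Xhat i = fun ω => (fun mv => g i mv.1 mv.2) (M ω, Fin.take i i.isLt.le (Z ω)) from
      funext (hXhat i)]
    have hfib : ∀ st,
        MeasurableSet ((fun ω => (X i ω, M ω, Fin.take i i.isLt.le (Z ω))) ⁻¹' {st}) :=
      measurableSet_preimage_comp_singleton hZ fun x => (x i, e x, Fin.take i i.isLt.le x)
    exact condEntropy_le_condEntropy_comp hfib (fun mv => g i mv.1 mv.2)
  calc ∑ i, (shannonEntropy μ (X i) - condEntropy μ (X i) (Xhat i))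
      ≤ ∑ i, (shannonEntropy μ (X i)
          - condEntropy μ (X i) (fun ω => (M ω, Fin.take i i.isLt.le (Z ω)))) :=
        sum_le_sum fun i _ => sub_le_sub_left (decoding i) _
    _ = shannonEntropy μ M := by rw [sum_sub_distrib, ← independent, ← chain, sub_sub_cancel]
    _ ≤ log N := by
        simpa using shannonEntropy_le_log_card (measurableSet_preimage_comp_singleton hZ e)

/-- Per-letter converse bound for feedforward source coding: for an i.i.d.
source `X₁,…,Xₙ` with per-letter pmf `p`, an encoder `e` into `Fin N`, and
unit-lag feedforward decoders `gᵢ` producing `X̂ᵢ = gᵢ(M, X₁,…,X_{i−1})` from the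
message `M = e(X₁,…,Xₙ)`, one has `log N ≥ Σᵢ (H[Xᵢ] − H[Xᵢ | X̂ᵢ])`,
i.e. `log N ≥ Σᵢ I[Xᵢ ; X̂ᵢ]`. -/
theorem feedforward_sum_mutualInfo_le_log
    {𝒳 𝒳' : Type} [Fintype 𝒳] [Fintype 𝒳'] [Nonempty 𝒳] [Nonempty 𝒳']
    (p : 𝒳 → ℝ) (hp0 : ∀ a, 0 ≤ p a) (hp1 : ∑ a, p a = 1)
    {Ω : Type} [MeasurableSpace Ω] (μ : Measure Ω) [IsProbabilityMeasure μ]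
    (n N : ℕ) (X : Fin n → Ω → 𝒳)
    (hXmeas : ∀ i a, MeasurableSet ((X i) ⁻¹' {a}))
    (hiid : ∀ x : Fin n → 𝒳,
      (μ {ω | ∀ i, X i ω = x i}).toReal = ∏ i, p (x i))
    (e : (Fin n → 𝒳) → Fin N)
    (g : (i : Fin n) → Fin N → (Fin i.val → 𝒳) → 𝒳')
    (Xhat : Fin n → Ω → 𝒳')
    (hXhat : ∀ i ω, Xhat i ω =
      g i (e (fun j => X j ω)) (fun j => X ⟨j.val, j.isLt.trans i.isLt⟩ ω)) :
    ∑ i : Fin n, (shannonEntropy μ (X i) - condEntropy μ (X i) (Xhat i))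
      ≤ Real.log N :=
  feedforward_sum_mutualInfo_le_log_general p hp1 μ n N X hXmeas hiid e g Xhat hXhat
end

section
/- Fix n ≥ e ≥ 0. Consider the erasure alphabet 𝒜 = {0, 1, *}. Suppose there are an encoder enc : 𝒜ⁿ → Fin K and decoders gᵢ : Fin K × 𝒜^{i−1} → {0,1} (i = 1,…,n) such that for every sequence x ∈ 𝒜ⁿ containing exactly e symbols equal to *, setting m = enc(x) and x̂ᵢ = gᵢ(m, x₁,…,x_{i−1}), one has x̂ᵢ = xᵢ for every index i with xᵢ ≠ *. Then K ≥ 2^{n−e}. -/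
/-!
Fill the first `n - e` positions with an arbitrary bit string and erase the remaining `e`.
Two sources with the same erasure pattern and the same message are equal: by induction along
the sequence the decoder sees the same past for both, hence outputs the same symbol, which must
be the true one wherever it is not erased. So the encoder is injective on these `2 ^ (n - e)`
sources.
-/

open Finset

def ReconstructsExactly {n : ℕ} {M β : Type*}
    (g : (i : Fin n) → M → (Fin i.val → Option β) → β) (m : M) (x : Fin n → Option β) : Prop :=
  ∀ i : Fin n, ∀ b : β, x i = some b → g i m (fun j => x ⟨j.val, j.isLt.trans i.isLt⟩) = b

theorem ReconstructsExactly.eq_of_eq_none_iff {n : ℕ} {M β : Type*}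
    {g : (i : Fin n) → M → (Fin i.val → Option β) → β} {m : M} {x y : Fin n → Option β}
    (hx : ReconstructsExactly g m x) (hy : ReconstructsExactly g m y)
    (hnone : ∀ i, x i = none ↔ y i = none) : x = y := by
  suffices hprefix : ∀ k, ∀ i : Fin n, i.val < k → x i = y i from
    funext fun i => hprefix n i i.isLt
  intro k
  induction k with
  | zero => intro i hi; omega
  | succ k ih =>
    intro i hi
    rcases Nat.lt_succ_iff_lt_or_eq.mp hi with hi | rfl
    · exact ih i hi
    cases hxi : x i with
    | none => exact ((hnone i).mp hxi).symm
    | some b =>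
      have hyi_ne : y i ≠ none := fun h => by simp [(hnone i).mpr h] at hxi
      obtain ⟨c, hyi⟩ := Option.ne_none_iff_exists'.mp hyi_ne
      have hsame_past : (fun j : Fin i.val => x ⟨j.val, j.isLt.trans i.isLt⟩) =
          fun j => y ⟨j.val, j.isLt.trans i.isLt⟩ :=
        funext fun j => ih _ j.isLt
      rw [hyi, ← hx i b hxi, ← hy i c hyi, hsame_past]

def padWithErasures {m : ℕ} (n : ℕ) (b : Fin m → Bool) : Fin n → Option Bool := fun i =>
  if h : i.val < m then some (b ⟨i.val, h⟩) else none

theorem padWithErasures_eq_none_iff {m n : ℕ} (b : Fin m → Bool) (i : Fin n) :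
    padWithErasures n b i = none ↔ ¬ i.val < m := by
  simp [padWithErasures]

theorem card_filter_padWithErasures_eq_none {m n : ℕ} (hmn : m ≤ n) (b : Fin m → Bool) :
    #{i | padWithErasures n b i = none} = n - m := by
  simp only [padWithErasures_eq_none_iff]
  rw [filter_not, card_sdiff_of_subset (filter_subset _ _), Fin.card_filter_val_lt,
    card_univ, Fintype.card_fin, min_eq_right hmn]

theorem padWithErasures_injective {m n : ℕ} (hmn : m ≤ n) :
    Function.Injective (padWithErasures (m := m) n) := by
  intro b c hbc
  funext j
  simpa [padWithErasures, j.isLt] using congrFun hbc ⟨j.val, j.isLt.trans_le hmn⟩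

/-- Converse for binary erasure quantization with unit-lag feedforward:
if an encoder `enc` into `Fin K` together with causal decoders `g i` (which see
the message and the true first `i − 1` source samples) reconstructs every
non-erased sample exactly, for every source sequence in `{0,1,*}ⁿ`
(modeled as `Option Bool`, with `none` playing the role of `*`) having exactly
`e` erasures, then `K ≥ 2^(n − e)`. -/
theorem beq_feedforward_converse
    (n e : ℕ) (he : e ≤ n) (K : ℕ)
    (enc : (Fin n → Option Bool) → Fin K)
    (g : (i : Fin n) → Fin K → (Fin i.val → Option Bool) → Bool)
    (hzero : ∀ x : Fin n → Option Bool,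
      (Finset.univ.filter (fun i => x i = none)).card = e →
      ∀ i : Fin n, ∀ b : Bool, x i = some b →
        g i (enc x) (fun j => x ⟨j.val, j.isLt.trans i.isLt⟩) = b) :
    2 ^ (n - e) ≤ K := by
  have hmn : n - e ≤ n := Nat.sub_le n e
  set x : (Fin (n - e) → Bool) → Fin n → Option Bool := padWithErasures n
  have hreconstructs : ∀ b, ReconstructsExactly g (enc (x b)) (x b) := fun b =>
    hzero (x b) (by rw [card_filter_padWithErasures_eq_none hmn]; omega)
  have hinj : Function.Injective (enc ∘ x) := by
    intro b c hbc
    have hc := hreconstructs c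
    rw [← show enc (x b) = enc (x c) from hbc] at hc
    refine padWithErasures_injective hmn ((hreconstructs b).eq_of_eq_none_iff hc fun i => ?_)
    simp only [x, padWithErasures_eq_none_iff]
  simpa using Fintype.card_le_of_injective _ hinj
end

section
/- Let H > h > 0 be real numbers, set r = H/h, and let M > 0, ε ≥ 0 be real and K ≥ 1 a natural number. Suppose R and n are real numbers with R ≤ M·H·r^{K−1} + ε·K·r^{K} and n ≥ M·(r^{K} − 1)/(r − 1). Then R/n ≤ (H − h) · (1 + ε·K/(M·h)) / (1 − r^{−K}). -/
/-!
Since `H = r h`, the bound on `R` reads `r^K (M h + ε K)`, while the bound on `n` is the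
geometric sum `M (1 + r + ⋯ + r^(K-1))`; their ratio is exactly the claimed rate, and
replacing `R` and `n` by these bounds can only increase `R / n`.
-/

lemma feedforward_rate_eq {H h r M c : ℝ} {K : ℕ} (hK : 1 ≤ K) (hH : H = r * h)
    (hh : h ≠ 0) (hM : M ≠ 0) (hr0 : r ≠ 0) (hr : r ≠ 1) (hrK : r ^ K ≠ 1) :
    (M * H * r ^ (K - 1) + c * r ^ K) / (M * (r ^ K - 1) / (r - 1))
      = (H - h) * (1 + c / (M * h)) / (1 - (r ^ K)⁻¹) := by
  have hpow : r ^ K = r * r ^ (K - 1) := by rw [← pow_succ', Nat.sub_add_cancel hK]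
  have hr1 : r - 1 ≠ 0 := sub_ne_zero.2 hr
  have hrK1 : r ^ K - 1 ≠ 0 := sub_ne_zero.2 hrK
  subst hH
  rw [hpow] at hrK1 ⊢
  field_simp

/-- Rate analysis of the feedforward source coder: with `H = H(Q)`, `h = H(Q|X)`,
`r = H/h`, minimum block size `M`, per-block compressor overhead `ε`, and `K`
encoding passes, if the total number of bits `R` and the total number of encoded
samples `n` satisfy the stated bounds, then the rate `R/n` is at most
`(H − h)·(1 + εK/(Mh)) / (1 − r^{−K})`. -/
theorem feedforward_rate_bound
    (H h : ℝ) (hh : 0 < h) (hHh : h < H)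
    (r : ℝ) (hr : r = H / h)
    (M ε : ℝ) (hM : 0 < M) (hε : 0 ≤ ε)
    (K : ℕ) (hK : 1 ≤ K)
    (R n : ℝ)
    (hR : R ≤ M * H * r ^ (K - 1) + ε * (K : ℝ) * r ^ K)
    (hn : n ≥ M * (r ^ K - 1) / (r - 1)) :
    R / n ≤ (H - h) * (1 + ε * (K : ℝ) / (M * h)) / (1 - (r ^ K)⁻¹) := by
  have hr1 : 1 < r := hr ▸ (one_lt_div hh).2 hHh
  have hrK : 1 < r ^ K := one_lt_pow₀ hr1 (by omega)
  have hH : H = r * h := by rw [hr, div_mul_cancel₀ H hh.ne']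
  have hn0 : 0 < M * (r ^ K - 1) / (r - 1) :=
    div_pos (mul_pos hM (sub_pos.2 hrK)) (sub_pos.2 hr1)
  have hr0 : 0 < r := one_pos.trans hr1
  have hB : 0 ≤ M * H * r ^ (K - 1) + ε * (K : ℝ) * r ^ K := by
    have : 0 < H := hh.trans hHh
    positivity
  calc R / n ≤ (M * H * r ^ (K - 1) + ε * (K : ℝ) * r ^ K) / (M * (r ^ K - 1) / (r - 1)) :=
        div_le_div₀ hB hR hn0 hn
    _ = _ := feedforward_rate_eq hK hH hh.ne' hM.ne' hr0.ne' hr1.ne' hrK.ne'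
end
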